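/- arXiv:1105.0029 — 6 statements merged into one kernel-verified Lean document; each statement's English description precedes it below -/
import Mathlib

section
/- If A is a nearly convex subset of a Euclidean space X, witnessed by a convex set C with C ⊆ A ⊆ closure C, then A ≈ closure A ≈ relative interior of A ≈ convex hull of A ≈ C. In particular, closure A and the relative interior of A are convex, and if A is nonempty then its relative interior is nonempty. -/
variable {X : Type*} [NormedAddCommGroup X] [InnerProductSpace ℝ X] [FiniteDimensional ℝ X]

def NearlyEqual (A B : Set X) : Prop :=
  closure A = closure B ∧ intrinsicInterior ℝ A = intrinsicInterior ℝ B

def NearlyConvex (A : Set X) : Prop :=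
  ∃ C : Set X, Convex ℝ C ∧ C ⊆ A ∧ A ⊆ closure C

/-!
Everything rests on the relative version of the segment principle: if `z` lies in the relative
interior of a convex set `C` and `w` in its closure, then the open segment `(z, w)` lies in the
relative interior of `C`. It gives convexity of `ri C`, `closure (ri C) = closure C` and
`ri (closure C) = ri C`. Since a set `B` with `C ⊆ B ⊆ closure C` has the same affine span as `C`,
it is then squeezed between `C` and `closure C` in both closure and relative interior, so `B ≈ C`.
Each of `A`, `closure A`, `convexHull ℝ A` is such a `B`, and `ri C ≈ C` because `ri C` is convex
with `ri C ⊆ C ⊆ closure (ri C)`.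
-/

section IntrinsicInterior

open Metric Topology

theorem mem_intrinsicInterior_iff_ball {𝕜 V P : Type*} [Ring 𝕜] [AddCommGroup V] [Module 𝕜 V]
    [PseudoMetricSpace P] [AddTorsor V P] {s : Set P} {x : P} :
    x ∈ intrinsicInterior 𝕜 s ↔
      x ∈ affineSpan 𝕜 s ∧ ∃ ε > 0, ball x ε ∩ affineSpan 𝕜 s ⊆ s := by
  constructor
  · rintro ⟨y, hy, rfl⟩
    obtain ⟨ε, hε, hball⟩ := Metric.mem_nhds_iff.1 (mem_interior_iff_mem_nhds.1 hy)
    exact ⟨y.2, ε, hε, fun z ⟨hzy, hz⟩ =>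
      hball (show (⟨z, hz⟩ : affineSpan 𝕜 s) ∈ ball y ε from hzy)⟩
  · rintro ⟨hx, ε, hε, hball⟩
    refine ⟨⟨x, hx⟩, mem_interior_iff_mem_nhds.2 (Metric.mem_nhds_iff.2 ⟨ε, hε, ?_⟩), rfl⟩
    exact fun z hz => hball ⟨hz, z.2⟩

theorem intrinsicInterior_mono_of_affineSpan_le {𝕜 V P : Type*} [Ring 𝕜] [AddCommGroup V]
    [Module 𝕜 V] [PseudoMetricSpace P] [AddTorsor V P] {s t : Set P} (hst : s ⊆ t)
    (hspan : affineSpan 𝕜 t ≤ affineSpan 𝕜 s) : intrinsicInterior 𝕜 s ⊆ intrinsicInterior 𝕜 t := by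
  intro x hx
  obtain ⟨hxs, ε, hε, hball⟩ := mem_intrinsicInterior_iff_ball.1 hx
  exact mem_intrinsicInterior_iff_ball.2 ⟨affineSpan_mono 𝕜 hst hxs, ε, hε,
    fun y ⟨hyx, hyt⟩ => hst (hball ⟨hyx, hspan hyt⟩)⟩

variable {E : Type*} [NormedAddCommGroup E] [NormedSpace ℝ E] [FiniteDimensional ℝ E]
  {s t : Set E}

theorem closure_subset_affineSpan : closure s ⊆ affineSpan ℝ s :=
  (affineSpan ℝ s).closed_of_finiteDimensional.closure_subset_iff.2 (subset_affineSpan ℝ s)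

theorem affineSpan_le_of_subset_closure (h : t ⊆ closure s) : affineSpan ℝ t ≤ affineSpan ℝ s :=
  affineSpan_le.2 (h.trans closure_subset_affineSpan)

theorem Convex.openSegment_intrinsicInterior_closure_subset_intrinsicInterior (hs : Convex ℝ s)
    {z w : E} (hz : z ∈ intrinsicInterior ℝ s) (hw : w ∈ closure s) :
    openSegment ℝ z w ⊆ intrinsicInterior ℝ s := by
  rintro x ⟨b, a, hb, ha, hab, rfl⟩
  obtain ⟨hzS, δ, hδ, hball⟩ := mem_intrinsicInterior_iff_ball.1 hz
  refine mem_intrinsicInterior_iff_ball.2 ⟨(affineSpan ℝ s).convex hzS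
    (closure_subset_affineSpan hw) hb.le ha.le hab, b * δ / 2, by positivity, ?_⟩
  rintro y ⟨hyx, hyS⟩
  obtain ⟨w', hw's, hww'⟩ := Metric.mem_closure_iff.1 hw (b * δ / (2 * a)) (by positivity)
  set z' := AffineMap.lineMap w' y b⁻¹
  have hz'S : z' ∈ affineSpan ℝ s := AffineMap.lineMap_mem _ (subset_affineSpan ℝ s hw's) hyS
  have hy : y = b • z' + a • w' := by
    simp only [z', AffineMap.lineMap_apply_module]
    match_scalars <;> field_simp
    linarith
  have hz'z : z' - z = b⁻¹ • ((y - (b • z + a • w)) + a • (w - w')) := by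
    simp only [z', AffineMap.lineMap_apply_module]
    match_scalars <;> field_simp <;> linarith
  have hdist : dist z' z < δ := calc
    dist z' z ≤ b⁻¹ * (dist y (b • z + a • w) + a * dist w w') := by
      rw [dist_eq_norm, hz'z, norm_smul, Real.norm_of_nonneg (inv_nonneg.2 hb.le),
        dist_eq_norm, dist_eq_norm]
      gcongr
      exact (norm_add_le _ _).trans_eq (by rw [norm_smul, Real.norm_of_nonneg ha.le])
    _ < b⁻¹ * (b * δ / 2 + a * (b * δ / (2 * a))) := by gcongr; exact hyx
    _ = δ := by field_simp; ring
  rw [hy]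
  exact hs (hball ⟨hdist, hz'S⟩) hw's hb.le ha.le hab

protected theorem Convex.intrinsicInterior (hs : Convex ℝ s) :
    Convex ℝ (intrinsicInterior ℝ s) :=
  convex_iff_openSegment_subset.2 fun _ hx _ hy =>
    hs.openSegment_intrinsicInterior_closure_subset_intrinsicInterior hx
      (subset_closure (intrinsicInterior_subset hy))

theorem Convex.closure_intrinsicInterior (hs : Convex ℝ s) :
    closure (intrinsicInterior ℝ s) = closure s := by
  refine (closure_mono intrinsicInterior_subset).antisymm
    (closure_minimal (fun x hx => ?_) isClosed_closure)
  obtain ⟨z, hz⟩ := Set.Nonempty.intrinsicInterior hs ⟨x, hx⟩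
  exact closure_mono (hs.openSegment_intrinsicInterior_closure_subset_intrinsicInterior hz
    (subset_closure hx)) (segment_subset_closure_openSegment (right_mem_segment ℝ z x))

theorem Convex.intrinsicInterior_closure (hs : Convex ℝ s) :
    intrinsicInterior ℝ (closure s) = intrinsicInterior ℝ s := by
  refine subset_antisymm (fun x hx => ?_)
    (intrinsicInterior_mono_of_affineSpan_le subset_closure
      (affineSpan_le_of_subset_closure le_rfl))
  obtain ⟨hxS, ε, hε, hball⟩ := mem_intrinsicInterior_iff_ball.1 hx
  obtain ⟨z, hz⟩ := Set.Nonempty.intrinsicInterior hs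
    (closure_nonempty_iff.1 ⟨x, intrinsicInterior_subset hx⟩)
  have hzS : z ∈ affineSpan ℝ (closure s) :=
    affineSpan_mono ℝ subset_closure (subset_affineSpan ℝ s (intrinsicInterior_subset hz))
  -- `x` lies on the open segment from `z` to a point of `closure s` slightly beyond `x`
  obtain ⟨t, ht, htpos⟩ : ∃ t : ℝ, AffineMap.lineMap z x (1 + t) ∈ ball x ε ∧ 0 < t := by
    have hcont : Continuous fun t : ℝ => AffineMap.lineMap z x (1 + t) := by fun_prop
    have hlim := hcont.tendsto' 0 x (by simp)
    exact ((hlim.eventually (ball_mem_nhds x hε)).filter_mono nhdsWithin_le_nhds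
      |>.and self_mem_nhdsWithin).exists (f := 𝓝[>] (0 : ℝ))
  have hw : AffineMap.lineMap z x (1 + t) ∈ closure s := hball ⟨ht, AffineMap.lineMap_mem _ hzS hxS⟩
  refine hs.openSegment_intrinsicInterior_closure_subset_intrinsicInterior hz hw ?_
  refine ⟨t / (1 + t), 1 / (1 + t), by positivity, by positivity, by field_simp; ring, ?_⟩
  rw [AffineMap.lineMap_apply_module]
  match_scalars <;> field_simp
  ring

theorem Convex.intrinsicInterior_eq_of_subset_of_subset_closure (hs : Convex ℝ s) (hst : s ⊆ t)
    (hts : t ⊆ closure s) : intrinsicInterior ℝ t = intrinsicInterior ℝ s :=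
  subset_antisymm
    ((intrinsicInterior_mono_of_affineSpan_le hts
      (affineSpan_le_of_subset_closure (closure_mono hst))).trans
      hs.intrinsicInterior_closure.le)
    (intrinsicInterior_mono_of_affineSpan_le hst (affineSpan_le_of_subset_closure hts))

end IntrinsicInterior

set_option linter.unusedSectionVars false

namespace NearlyEqual

variable {A B C : Set X}

theorem symm (h : NearlyEqual A B) : NearlyEqual B A := ⟨h.1.symm, h.2.symm⟩

theorem trans (hAB : NearlyEqual A B) (hBC : NearlyEqual B C) : NearlyEqual A C :=
  ⟨hAB.1.trans hBC.1, hAB.2.trans hBC.2⟩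

end NearlyEqual

theorem Convex.nearlyEqual_of_subset_of_subset_closure {B C : Set X} (hC : Convex ℝ C)
    (hCB : C ⊆ B) (hBC : B ⊆ closure C) : NearlyEqual B C :=
  ⟨(closure_minimal hBC isClosed_closure).antisymm (closure_mono hCB),
    hC.intrinsicInterior_eq_of_subset_of_subset_closure hCB hBC⟩

theorem Convex.intrinsicInterior_nearlyEqual {C : Set X} (hC : Convex ℝ C) :
    NearlyEqual (intrinsicInterior ℝ C) C :=
  (hC.intrinsicInterior.nearlyEqual_of_subset_of_subset_closure intrinsicInterior_subset
    (hC.closure_intrinsicInterior ▸ subset_closure)).symm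

theorem nearlyConvex_nearlyEqual (A C : Set X) (hC : Convex ℝ C)
    (hCA : C ⊆ A) (hAC : A ⊆ closure C) :
    NearlyEqual A (closure A) ∧ NearlyEqual A (intrinsicInterior ℝ A) ∧
    NearlyEqual A (convexHull ℝ A) ∧
    NearlyEqual A (intrinsicInterior ℝ (convexHull ℝ A)) ∧ NearlyEqual A C ∧
    Convex ℝ (closure A) ∧ Convex ℝ (intrinsicInterior ℝ A) ∧
    (A.Nonempty → (intrinsicInterior ℝ A).Nonempty) := by
  have hA : NearlyEqual A C := hC.nearlyEqual_of_subset_of_subset_closure hCA hAC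
  have hclosure : NearlyEqual (closure A) C := hC.nearlyEqual_of_subset_of_subset_closure
    (hCA.trans subset_closure) (closure_minimal hAC isClosed_closure)
  have hhull : NearlyEqual (convexHull ℝ A) C := hC.nearlyEqual_of_subset_of_subset_closure
    (hCA.trans (subset_convexHull ℝ A)) (convexHull_min hAC hC.closure)
  have hri : NearlyEqual (intrinsicInterior ℝ C) C := hC.intrinsicInterior_nearlyEqual
  refine ⟨hA.trans hclosure.symm, hA.trans (hA.2 ▸ hri).symm, hA.trans hhull.symm,
    hA.trans (hhull.2 ▸ hri).symm, hA, hA.1 ▸ hC.closure, hA.2 ▸ hC.intrinsicInterior,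
    fun hne => ?_⟩
  rw [hA.2]
  exact (closure_nonempty_iff.1 (hne.mono hAC)).intrinsicInterior hC
end

section
/- A subset A of a Euclidean space is nearly convex if and only if A is nearly equal to some convex set. -/
section AuxEspace
variable {E : Type*} [NormedAddCommGroup E] [NormedSpace ℝ E]

lemma aux_closure_interior {D : Set E} (hD : Convex ℝ D) (hne : (interior D).Nonempty) :
    closure (interior D) = closure D := by
  refine subset_antisymm (closure_mono interior_subset) fun x hx => ?_
  obtain ⟨y, hy⟩ := hne
  have hseq : ∀ n : ℕ, x + (1/(n+1) : ℝ) • (y - x) ∈ interior D := fun n =>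
    hD.add_smul_sub_mem_interior' hx hy ⟨by positivity, by
      rw [div_le_one (by positivity)]; linarith [Nat.cast_nonneg (α := ℝ) n]⟩
  have htend : Filter.Tendsto (fun n : ℕ => x + (1/(n+1) : ℝ) • (y - x)) Filter.atTop (nhds x) := by
    have h0 : Filter.Tendsto (fun n : ℕ => (1/(n+1) : ℝ)) Filter.atTop (nhds 0) :=
      tendsto_one_div_add_atTop_nhds_zero_nat
    have := (h0.smul_const (y - x)).const_add x
    simpa using this
  exact mem_closure_of_tendsto htend (Filter.Eventually.of_forall fun n => hseq n)

lemma aux_interior_closure {D : Set E} (hD : Convex ℝ D) (hne : (interior D).Nonempty) :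
    interior (closure D) = interior D := by
  refine subset_antisymm (fun x hx => ?_) (interior_mono subset_closure)
  obtain ⟨y, hy⟩ := hne
  obtain ⟨ε, hε, hball⟩ := Metric.mem_nhds_iff.1 (mem_interior_iff_mem_nhds.1 hx)
  set t : ℝ := ε / (2 * (‖x - y‖ + 1)) with ht
  have htpos : 0 < t := by positivity
  have hz : x + t • (x - y) ∈ closure D := by
    apply hball
    simp only [Metric.mem_ball, dist_self_add_left, norm_smul, Real.norm_eq_abs,
      abs_of_pos htpos]
    calc t * ‖x - y‖ ≤ t * (‖x - y‖ + 1) := by nlinarith [norm_nonneg (x - y)]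
      _ = ε / 2 := by rw [ht]; field_simp
      _ < ε := by linarith
  set z := x + t • (x - y) with hzdef
  have key : z + (t/(1+t)) • (y - z) ∈ interior D :=
    hD.add_smul_sub_mem_interior' hz hy ⟨by positivity, by
      rw [div_le_one (by positivity)]; linarith⟩
  have hx' : z + (t/(1+t)) • (y - z) = x := by
    have hyz : y - z = -((1+t) • (x - y)) := by
      rw [hzdef]; module
    rw [hyz, smul_neg, smul_smul, div_mul_cancel₀ _ (by positivity : (1+t) ≠ 0), hzdef]
    module
  rwa [hx'] at key

end AuxEspace

section AuxOpen
variable {𝕜 V P : Type*} [Ring 𝕜] [AddCommGroup V] [Module 𝕜 V] [TopologicalSpace P]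
  [AddTorsor V P]

lemma aux_intrinsicInterior_of_isOpen {s : Set P}
    (hs : IsOpen ((affineSpan 𝕜 s : AffineSubspace 𝕜 P) : Set P)) :
    intrinsicInterior 𝕜 s = interior s := by
  refine subset_antisymm ?_ interior_subset_intrinsicInterior
  have hom : IsOpenMap ((↑) : affineSpan 𝕜 s → P) := hs.isOpenMap_subtype_val
  calc (↑) '' interior (((↑) : affineSpan 𝕜 s → P) ⁻¹' s)
      ⊆ interior ((↑) '' (((↑) : affineSpan 𝕜 s → P) ⁻¹' s)) := hom.image_interior_subset _
    _ ⊆ interior s := interior_mono (Set.image_preimage_subset _ _)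

end AuxOpen

variable {X : Type*} [NormedAddCommGroup X] [InnerProductSpace ℝ X] [FiniteDimensional ℝ X]

lemma aux_main {C A : Set X} (hC : Convex ℝ C) (hne : C.Nonempty)
    (hCA : C ⊆ A) (hAC : A ⊆ closure C) :
    intrinsicInterior ℝ A = intrinsicInterior ℝ C ∧
      closure (intrinsicInterior ℝ C) = closure C ∧
      Convex ℝ (intrinsicInterior ℝ C) := by
  obtain ⟨p, hp⟩ := hne
  haveI : Nonempty (affineSpan ℝ C) := ⟨⟨p, subset_affineSpan ℝ C hp⟩⟩
  set S := affineSpan ℝ C with hS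
  let p' : S := ⟨p, subset_affineSpan ℝ C hp⟩
  let φ : S.direction →ᵃⁱ[ℝ] X :=
    S.subtypeₐᵢ.comp (AffineIsometryEquiv.constVSub ℝ p').symm.toAffineIsometry
  have hφcoe : ⇑φ = Subtype.val ∘ ⇑(AffineIsometryEquiv.constVSub ℝ p').symm := rfl
  have hφS : Set.range ⇑φ = (S : Set X) := by
    rw [hφcoe, Set.range_comp, (AffineIsometryEquiv.constVSub ℝ p').symm.surjective.range_eq,
      Set.image_univ, Subtype.range_val]
  have hinj : Function.Injective ⇑φ := φ.isometry.injective
  have hclS : IsClosed (S : Set X) := S.closed_of_finiteDimensional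
  have hCS : C ⊆ (S : Set X) := subset_affineSpan ℝ C
  have hclCS : closure C ⊆ (S : Set X) := closure_minimal hCS hclS
  set D := ⇑φ ⁻¹' C with hDdef
  set A' := ⇑φ ⁻¹' A with hA'def
  have himD : ⇑φ '' D = C := Set.image_preimage_eq_of_subset (by rw [hφS]; exact hCS)
  have himA : ⇑φ '' A' = A :=
    Set.image_preimage_eq_of_subset (by rw [hφS]; exact hAC.trans hclCS)
  have hD : Convex ℝ D := by
    have := hC.affine_preimage φ.toAffineMap
    simpa [hDdef] using this
  have hce : Topology.IsClosedEmbedding ⇑φ := φ.isometry.isClosedEmbedding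
  have hclim : ∀ s : Set S.direction, closure (⇑φ '' s) = ⇑φ '' closure s :=
    fun s => hce.closure_image_eq s
  have htop : affineSpan ℝ D = ⊤ := by
    rw [eq_top_iff]
    intro x _
    have hxm : φ x ∈ (affineSpan ℝ D).map φ.toAffineMap := by
      rw [AffineSubspace.map_span]
      have : φ x ∈ (S : Set X) := by rw [← hφS]; exact Set.mem_range_self x
      simpa [himD] using this
    obtain ⟨y, hy, hyx⟩ := hxm
    rwa [← hinj hyx]
  have hIi : ∀ s : Set S.direction, affineSpan ℝ s = ⊤ →
      intrinsicInterior ℝ s = interior s := by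
    intro s hs
    apply aux_intrinsicInterior_of_isOpen
    rw [hs]
    simp
  have hID : intrinsicInterior ℝ D = interior D := hIi D htop
  have hintne : (interior D).Nonempty := (hD.interior_nonempty_iff_affineSpan_eq_top).2 htop
  have hiiC : intrinsicInterior ℝ C = ⇑φ '' interior D := by
    rw [← himD, φ.image_intrinsicInterior, hID]
  have htopA' : affineSpan ℝ A' = ⊤ := by
    rw [eq_top_iff, ← htop]
    exact affineSpan_mono ℝ (by rw [hDdef, hA'def]; exact Set.preimage_mono hCA)
  have hA'cl : A' ⊆ closure D := by
    have : A' ⊆ ⇑φ ⁻¹' closure C := Set.preimage_mono hAC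
    rwa [← himD, hclim, Set.preimage_image_eq _ hinj] at this
  have hintA' : interior A' = interior D :=
    subset_antisymm
      (by
        have h1 : interior A' ⊆ interior (closure D) := interior_mono hA'cl
        rwa [aux_interior_closure hD hintne] at h1)
      (interior_mono (Set.preimage_mono hCA))
  refine ⟨?_, ?_, ?_⟩
  · rw [← himA, φ.image_intrinsicInterior, hIi A' htopA', hintA', hiiC]
  · rw [hiiC, hclim, aux_closure_interior hD hintne, ← hclim, himD]
  · rw [hiiC]
    simpa using hD.interior.affine_image φ.toAffineMap

theorem nearlyConvex_iff_nearlyEqual_convex (A : Set X) :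
    NearlyConvex A ↔ ∃ C : Set X, Convex ℝ C ∧ NearlyEqual A C := by
  constructor
  · rintro ⟨C, hC, hCA, hAC⟩
    rcases C.eq_empty_or_nonempty with rfl | hne
    · have hA : A = ∅ := by simpa using hAC
      exact ⟨∅, convex_empty, by simp [NearlyEqual, hA]⟩
    · refine ⟨C, hC, ?_, (aux_main hC hne hCA hAC).1⟩
      refine subset_antisymm ?_ (closure_mono hCA)
      simpa using closure_mono hAC
  · rintro ⟨C, hC, hcl, hint⟩
    rcases C.eq_empty_or_nonempty with rfl | hne
    · have hA : A = ∅ := by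
        have h1 : A ⊆ closure A := subset_closure
        rw [hcl] at h1
        simpa using h1
      exact ⟨∅, convex_empty, by simp [hA], by simp [hA]⟩
    · obtain ⟨-, hb, hc⟩ := aux_main hC hne subset_rfl subset_closure
      refine ⟨intrinsicInterior ℝ C, hc, ?_, ?_⟩
      · rw [← hint]; exact intrinsicInterior_subset
      · intro x hx
        rw [hb, ← hcl]
        exact subset_closure hx
end

section
/- If a subset A of a Euclidean space is nearly equal to some nearly convex set B, then A is itself nearly convex. -/
variable {X : Type*} [NormedAddCommGroup X] [InnerProductSpace ℝ X] [FiniteDimensional ℝ X]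

lemma mem_ri_iff {s : Set X} {x : X} :
    x ∈ intrinsicInterior ℝ s ↔
      x ∈ s ∧ ∃ ε > 0, ∀ y ∈ affineSpan ℝ s, dist y x < ε → y ∈ s := by
  constructor
  · intro hx
    refine ⟨intrinsicInterior_subset hx, ?_⟩
    obtain ⟨y, hy, rfl⟩ := mem_intrinsicInterior.1 hx
    rw [mem_interior_iff_mem_nhds, Metric.mem_nhds_iff] at hy
    obtain ⟨ε, hε, hball⟩ := hy
    refine ⟨ε, hε, fun z hz hdz => ?_⟩
    exact hball (show (⟨z, hz⟩ : affineSpan ℝ s) ∈ Metric.ball y ε by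
      simpa [Metric.mem_ball, Subtype.dist_eq] using hdz)
  · rintro ⟨hxs, ε, hε, hb⟩
    refine mem_intrinsicInterior.2 ⟨⟨x, subset_affineSpan ℝ s hxs⟩, ?_, rfl⟩
    rw [mem_interior_iff_mem_nhds, Metric.mem_nhds_iff]
    refine ⟨ε, hε, fun z hzb => hb z z.2 ?_⟩
    simpa [Metric.mem_ball, Subtype.dist_eq] using hzb

lemma combo_mem_ri {C : Set X} (hC : Convex ℝ C) {x₀ y : X}
    (hx₀ : x₀ ∈ intrinsicInterior ℝ C) (hy : y ∈ closure C) {t : ℝ}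
    (ht : 0 < t) (ht1 : t ≤ 1) :
    t • x₀ + (1 - t) • y ∈ intrinsicInterior ℝ C := by
  obtain ⟨hx₀C, ε, hε, hball⟩ := mem_ri_iff.1 hx₀
  set V := affineSpan ℝ C with hV
  have hclosed : IsClosed (V : Set X) := V.closed_of_finiteDimensional
  have hCV : C ⊆ (V : Set X) := subset_affineSpan ℝ C
  have hclV : closure C ⊆ (V : Set X) := closure_minimal hCV hclosed
  set z := t • x₀ + (1 - t) • y with hz
  have hx₀V : x₀ ∈ V := hCV hx₀C
  have hyV : y ∈ V := hclV hy
  have hzV : z ∈ V := by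
    have : (t • (x₀ - y)) +ᵥ y ∈ V :=
      V.vadd_mem_of_mem_direction (V.direction.smul_mem t (V.vsub_mem_direction hx₀V hyV)) hyV
    convert this using 1
    simp [hz, smul_sub, sub_smul]
    abel
  -- key ball property
  have key : ∀ w ∈ V, dist w z < t * ε / 2 → w ∈ C := by
    intro w hwV hwd
    obtain ⟨y'', hy''C, hy''d⟩ : ∃ y'' ∈ C, dist y'' y < t * ε / 2 := by
      have := Metric.mem_closure_iff.1 hy (t * ε / 2) (by positivity)
      obtain ⟨b, hbC, hbd⟩ := this
      exact ⟨b, hbC, by rwa [dist_comm]⟩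
    set v := w - z with hv
    have hvnorm : ‖v‖ < t * ε / 2 := by rwa [hv, ← dist_eq_norm]
    set u := v + (1 - t) • (y - y'') with hu
    have hunorm : ‖u‖ < t * ε := by
      have h1 : ‖(1 - t) • (y - y'')‖ ≤ ‖y - y''‖ := by
        rw [norm_smul, Real.norm_eq_abs, abs_of_nonneg (by linarith)]
        nlinarith [norm_nonneg (y - y'')]
      have h2 : ‖y - y''‖ < t * ε / 2 := by rw [← dist_eq_norm, dist_comm]; exact hy''d
      calc ‖u‖ ≤ ‖v‖ + ‖(1 - t) • (y - y'')‖ := norm_add_le _ _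
        _ < t * ε := by linarith
    set p := x₀ + t⁻¹ • u with hp
    have hpV : p ∈ V := by
      have huD : u ∈ V.direction := by
        refine V.direction.add_mem (V.vsub_mem_direction hwV hzV) (V.direction.smul_mem _ ?_)
        exact V.vsub_mem_direction (hclV hy) (hCV hy''C)
      have : (t⁻¹ • u) +ᵥ x₀ ∈ V :=
        V.vadd_mem_of_mem_direction (V.direction.smul_mem _ huD) hx₀V
      simpa [hp, add_comm] using this
    have hpC : p ∈ C := by
      refine hball p hpV ?_
      rw [hp, dist_self_add_left, norm_smul, Real.norm_eq_abs, abs_of_pos (by positivity)]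
      rw [inv_mul_lt_iff₀ ht]  -- t⁻¹ * ‖u‖ < ε ↔ ‖u‖ < t * ε
      exact hunorm
    have hwcombo : w = t • p + (1 - t) • y'' := by
      rw [hp, hu, hv]
      rw [smul_add, smul_smul, mul_inv_cancel₀ (ne_of_gt ht), one_smul]
      simp [hz, smul_sub]
      abel
    rw [hwcombo]
    exact hC hpC hy''C (le_of_lt ht) (by linarith) (by ring)
  -- conclude
  have hzC : z ∈ C := key z hzV (by simpa using by positivity)
  refine mem_ri_iff.2 ⟨hzC, t * ε / 2, by positivity, fun w hwV hwd => key w hwV hwd⟩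

lemma ri_convex {C : Set X} (hC : Convex ℝ C) : Convex ℝ (intrinsicInterior ℝ C) := by
  intro x hx y hy a b ha hb hab
  rcases eq_or_lt_of_le ha with rfl | ha'
  · simpa [show b = 1 by linarith] using hy
  · have hb' : b = 1 - a := by linarith
    rw [hb']
    exact combo_mem_ri hC hx (subset_closure (intrinsicInterior_subset hy)) ha' (by linarith)

lemma closure_ri {C : Set X} (hC : Convex ℝ C) (hne : C.Nonempty) :
    closure (intrinsicInterior ℝ C) = closure C := by
  refine le_antisymm (closure_mono intrinsicInterior_subset) ?_
  obtain ⟨x₀, hx₀⟩ := hne.intrinsicInterior hC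
  rw [← closure_closure (s := intrinsicInterior ℝ C)]
  refine closure_mono ?_
  intro y hy
  replace hy : y ∈ closure C := subset_closure hy
  have htend : Filter.Tendsto (fun t : ℝ => t • x₀ + (1 - t) • y) (nhdsWithin 0 (Set.Ioi 0)) (nhds y) := by
    have hcont : Continuous (fun t : ℝ => t • x₀ + (1 - t) • y) := by continuity
    have := hcont.tendsto 0
    simp only [zero_smul, sub_zero, one_smul, zero_add] at this
    exact this.mono_left nhdsWithin_le_nhds
  refine mem_closure_of_tendsto htend ?_
  filter_upwards [Ioc_mem_nhdsGT_of_mem (Set.mem_Ico.2 ⟨le_rfl, one_pos⟩)] with t ht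
  exact combo_mem_ri hC hx₀ hy ht.1 ht.2

lemma ri_sandwich {C B : Set X} (hC : Convex ℝ C) (hCB : C ⊆ B) (hBC : B ⊆ closure C)
    (hne : C.Nonempty) : intrinsicInterior ℝ B = intrinsicInterior ℝ C := by
  have hclosed : IsClosed ((affineSpan ℝ C : AffineSubspace ℝ X) : Set X) :=
    AffineSubspace.closed_of_finiteDimensional _
  have hspan : affineSpan ℝ B = affineSpan ℝ C := by
    refine le_antisymm ?_ (affineSpan_mono ℝ hCB)
    rw [affineSpan_le]
    exact hBC.trans (closure_minimal (subset_affineSpan ℝ C) hclosed)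
  apply Set.Subset.antisymm
  · intro x hx
    obtain ⟨hxB, ε, hε, hball⟩ := mem_ri_iff.1 hx
    obtain ⟨x₀, hx₀⟩ := hne.intrinsicInterior hC
    rcases eq_or_ne x x₀ with rfl | hne'
    · exact hx₀
    · set δ : ℝ := ε / (2 * (‖x - x₀‖ + 1)) with hδ
      have hδpos : 0 < δ := by positivity
      set y := x + δ • (x - x₀) with hy
      have hyV : y ∈ affineSpan ℝ B := by
        have hxV : x ∈ affineSpan ℝ B := subset_affineSpan ℝ B hxB
        have hx₀V : x₀ ∈ affineSpan ℝ B := by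
          rw [hspan]; exact subset_affineSpan ℝ C (intrinsicInterior_subset hx₀)
        have : (δ • (x - x₀)) +ᵥ x ∈ affineSpan ℝ B :=
          (affineSpan ℝ B).vadd_mem_of_mem_direction
            ((affineSpan ℝ B).direction.smul_mem _
              ((affineSpan ℝ B).vsub_mem_direction hxV hx₀V)) hxV
        simpa [hy, add_comm] using this
      have hyd : dist y x < ε := by
        rw [hy, dist_self_add_left, norm_smul, Real.norm_eq_abs, abs_of_pos hδpos, hδ]
        rw [div_mul_eq_mul_div, div_lt_iff₀ (by positivity)]
        nlinarith [norm_nonneg (x - x₀), hε]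
      have hyC : y ∈ closure C := hBC (hball y hyV hyd)
      have hcombo : x = (δ / (1 + δ)) • x₀ + (1 - δ / (1 + δ)) • y := by
        have h1δ : (1 : ℝ) + δ ≠ 0 := by positivity
        rw [hy]
        match_scalars <;> field_simp <;> ring
      rw [hcombo]
      refine combo_mem_ri hC hx₀ hyC (by positivity) ?_
      rw [div_le_one (by positivity)]
      linarith
  · intro x hx
    obtain ⟨hxC, ε, hε, hball⟩ := mem_ri_iff.1 hx
    refine mem_ri_iff.2 ⟨hCB hxC, ε, hε, fun y hyV hyd => ?_⟩
    exact hCB (hball y (by rwa [← hspan]) hyd)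

theorem nearlyConvex_of_nearlyEqual_nearlyConvex (A B : Set X)
    (hB : NearlyConvex B) (h : NearlyEqual A B) : NearlyConvex A := by
  obtain ⟨C, hCconv, hCB, hBC⟩ := hB
  rcases C.eq_empty_or_nonempty with rfl | hne
  · have hBempty : B = ∅ := by
      have := hBC
      simpa using this
    have hAempty : A = ∅ := by
      have h1 : closure A = ∅ := by rw [h.1, hBempty, closure_empty]
      exact Set.eq_empty_of_subset_empty (h1 ▸ subset_closure)
    exact ⟨∅, convex_empty, by simp [hAempty]⟩
  · refine ⟨intrinsicInterior ℝ C, ri_convex hCconv, ?_, ?_⟩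
    · rw [← ri_sandwich hCconv hCB hBC hne, ← h.2]
      exact intrinsicInterior_subset
    · rw [closure_ri hCconv hne]
      have hclB : closure B = closure C :=
        le_antisymm (closure_minimal hBC isClosed_closure) (closure_mono hCB)
      rw [← hclB, ← h.1]
      exact subset_closure
end

section
/- Cancellation for near equality: if A and B are nonempty nearly convex subsets of a Euclidean space, E is a nonempty compact subset, and A + E ≈ B + E, then A ≈ B. -/
open Pointwise

variable {X : Type*} [NormedAddCommGroup X] [InnerProductSpace ℝ X] [FiniteDimensional ℝ X]

open Set

theorem spanClosure (s : Set X) : affineSpan ℝ (closure s) = affineSpan ℝ s := by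
  refine le_antisymm (affineSpan_le.2 ?_) (affineSpan_mono ℝ subset_closure)
  exact closure_minimal (subset_affineSpan ℝ s) (affineSpan ℝ s).closed_of_finiteDimensional

theorem iiMono {s t : Set X} (hst : s ⊆ t)
    (hspan : affineSpan ℝ s = affineSpan ℝ t) :
    intrinsicInterior ℝ s ⊆ intrinsicInterior ℝ t := by
  rw [intrinsicInterior, intrinsicInterior, hspan]
  exact Set.image_mono (interior_mono (Set.preimage_mono hst))

-- interior of closure = interior for convex with nonempty interior
theorem intClos {Y : Type*} [NormedAddCommGroup Y] [NormedSpace ℝ Y] {s : Set Y}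
    (hs : Convex ℝ s) (hne : (interior s).Nonempty) :
    interior (closure s) = interior s := by
  refine le_antisymm ?_ (interior_mono subset_closure)
  intro x hx
  obtain ⟨y, hy⟩ := hne
  rcases eq_or_ne x y with rfl | hxy
  · exact hy
  obtain ⟨δ, hδ, hball⟩ := Metric.isOpen_iff.1 isOpen_interior x hx
  set ε : ℝ := δ / (2 * ‖x - y‖) with hε
  have hxy' : (0:ℝ) < ‖x - y‖ := by
    rw [norm_pos_iff]; exact sub_ne_zero_of_ne hxy
  have hε0 : 0 < ε := by positivity
  set z : Y := x + ε • (x - y) with hz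
  have hzmem : z ∈ closure s := by
    refine interior_subset (hball ?_)
    rw [Metric.mem_ball, dist_eq_norm]
    have : z - x = ε • (x - y) := by rw [hz]; abel
    rw [this, norm_smul, Real.norm_eq_abs, abs_of_pos hε0, hε]
    rw [div_mul_eq_mul_div, mul_comm]
    rw [div_lt_iff₀ (by positivity)]
    nlinarith
  have hcombo : x = (ε / (1 + ε)) • y + (1 / (1 + ε)) • z := by
    have h1 : (0:ℝ) < 1 + ε := by linarith
    rw [hz, smul_add, smul_smul]
    match_scalars <;> field_simp <;> ring
  rw [hcombo]
  exact hs.combo_interior_closure_mem_interior hy hzmem (by positivity)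
    (by positivity) (by field_simp; ring)

theorem iiClosure {C : Set X} (hC : Convex ℝ C) (hne : C.Nonempty) :
    intrinsicInterior ℝ (closure C) = intrinsicInterior ℝ C := by
  obtain ⟨p, hp⟩ := hne
  have hspan := spanClosure C
  rw [intrinsicInterior, intrinsicInterior, hspan]
  have himg : (Subtype.val '' (Subtype.val ⁻¹' C : Set (affineSpan ℝ C)) : Set X) = C := by
    refine Set.Subset.antisymm (Set.image_preimage_subset _ _) (fun x hx => ?_)
    exact ⟨⟨x, subset_affineSpan ℝ C hx⟩, hx, rfl⟩
  have hpre : (Subtype.val ⁻¹' closure C : Set (affineSpan ℝ C)) =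
      closure (Subtype.val ⁻¹' C : Set (affineSpan ℝ C)) := by
    rw [Topology.IsEmbedding.subtypeVal.closure_eq_preimage_closure_image, himg]
  rw [hpre]
  set s : Set (affineSpan ℝ C) := (Subtype.val ⁻¹' C) with hs
  let p' : affineSpan ℝ C := ⟨p, subset_affineSpan ℝ C hp⟩
  haveI : Nonempty (affineSpan ℝ C) := ⟨p'⟩
  let φ := (AffineIsometryEquiv.constVSub ℝ p').symm
  let hφ := φ.toHomeomorph
  have hconv : Convex ℝ (⇑hφ ⁻¹' s) := by
    show Convex ℝ (((affineSpan ℝ C).subtype.comp φ.toAffineEquiv.toAffineMap) ⁻¹' C)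
    exact hC.affine_preimage _
  have hintne : (interior s).Nonempty := by
    have h1 := (Set.Nonempty.intrinsicInterior hC ⟨p, hp⟩)
    rw [intrinsicInterior, Set.image_nonempty] at h1
    exact h1
  have hintne' : (interior (⇑hφ ⁻¹' s)).Nonempty := by
    rw [← hφ.preimage_interior]
    exact hintne.preimage hφ.surjective
  have key : interior (closure s) = interior s := by
    have h1 : interior (⇑hφ ⁻¹' closure s) = interior (⇑hφ ⁻¹' s) := by
      rw [hφ.preimage_closure]
      exact intClos hconv hintne'
    have h2 : ⇑hφ ⁻¹' interior (closure s) = ⇑hφ ⁻¹' interior s := by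
      rw [hφ.preimage_interior, hφ.preimage_interior, h1]
    exact (Set.preimage_eq_preimage hφ.surjective).1 h2
  rw [key]
theorem radstrom {B E : Set X} (hB : Convex ℝ B) (hBc : IsClosed B)
    (hEb : Bornology.IsBounded E) (hEne : E.Nonempty) {A : Set X}
    (h : A + E ⊆ B + E) : A ⊆ B := by
  intro a ha
  obtain ⟨e₀, he₀⟩ := hEne
  have key : ∀ e ∈ E, ∃ b ∈ B, ∃ e' ∈ E, a + e = b + e' := by
    intro e he
    obtain ⟨b, hb, e', he', hbe⟩ := h (Set.add_mem_add ha he)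
    exact ⟨b, hb, e', he', hbe.symm⟩
  choose! bf hbf ef hef heq using key
  let seq : ℕ → X := fun n => ef^[n] e₀
  have hseqsucc : ∀ n : ℕ, seq (n+1) = ef (seq n) := fun n =>
    Function.iterate_succ_apply' ef n e₀
  have hseqE : ∀ n : ℕ, seq n ∈ E := by
    intro n
    induction n with
    | zero => exact he₀
    | succ k ih => rw [hseqsucc]; exact hef _ ih
  have hsum : ∀ n : ℕ, (n : ℝ) • a + e₀ = (∑ i ∈ Finset.range n, bf (seq i)) + seq n := by
    intro n
    induction n with
    | zero => simp [seq]
    | succ k ih =>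
      have h1 : a + seq k = bf (seq k) + seq (k+1) := by
        rw [hseqsucc]; exact heq _ (hseqE k)
      push_cast
      rw [add_smul, one_smul, Finset.sum_range_succ]
      linear_combination (norm := module) ih + h1
  -- define c n and show tendsto
  obtain ⟨M, hM⟩ := hEb.exists_norm_le
  have hdist : ∀ n : ℕ, 0 < n → ∃ c ∈ B, ‖a - c‖ ≤ 2 * M / n := by
    intro n hn
    have hn' : (0:ℝ) < n := by exact_mod_cast hn
    refine ⟨(n:ℝ)⁻¹ • ∑ i ∈ Finset.range n, bf (seq i), ?_, ?_⟩
    · have := hB.sum_mem (t := Finset.range n) (w := fun _ => (n:ℝ)⁻¹)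
        (z := fun i => bf (seq i)) (fun i _ => by positivity)
        (by simp [Finset.sum_const, hn'.ne']) (fun i _ => hbf _ (hseqE i))
      simpa [Finset.smul_sum] using this
    · have hsn := hsum n
      have h3 : (n:ℝ) • (a - (n:ℝ)⁻¹ • ∑ i ∈ Finset.range n, bf (seq i))
          = seq n - e₀ := by
        rw [smul_sub, smul_smul, mul_inv_cancel₀ hn'.ne', one_smul]
        linear_combination (norm := module) hsn
      have hcalc : a - (n:ℝ)⁻¹ • ∑ i ∈ Finset.range n, bf (seq i)
          = (n:ℝ)⁻¹ • (seq n - e₀) := by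
        rw [← h3, smul_smul, inv_mul_cancel₀ hn'.ne', one_smul]
      rw [hcalc, norm_smul]
      have h2 : ‖seq n - e₀‖ ≤ 2 * M :=
        (norm_sub_le _ _).trans (by linarith [hM _ (hseqE n), hM _ he₀])
      calc ‖(n:ℝ)⁻¹‖ * ‖seq n - e₀‖ ≤ (n:ℝ)⁻¹ * (2*M) := by
            rw [Real.norm_eq_abs, abs_of_pos (by positivity)]
            exact mul_le_mul_of_nonneg_left h2 (by positivity)
        _ = 2 * M / n := by ring
  -- conclude a ∈ closure B = B
  have : a ∈ closure B := by
    rw [mem_closure_iff_nhds_basis Metric.nhds_basis_ball]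
    intro ε hε
    obtain ⟨n, hn⟩ := exists_nat_gt (2 * M / ε)
    have hM0 : (0:ℝ) ≤ M := le_trans (norm_nonneg e₀) (hM _ he₀)
    have hn0 : 0 < n := by
      have h0 : (0:ℝ) < n := lt_of_le_of_lt (by positivity) hn
      exact_mod_cast h0
    obtain ⟨c, hc, hdc⟩ := hdist n hn0
    refine ⟨c, hc, ?_⟩
    rw [Metric.mem_ball, dist_comm, dist_eq_norm]
    have hn' : (0:ℝ) < n := by exact_mod_cast hn0
    calc ‖a - c‖ ≤ 2*M/n := hdc
      _ < ε := by rw [div_lt_iff₀ hn']; rw [div_lt_iff₀ hε] at hn; nlinarith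
  rwa [hBc.closure_eq] at this

theorem iiNearly {A C : Set X} (hCconv : Convex ℝ C) (hCne : C.Nonempty)
    (hCA : C ⊆ A) (hAC : A ⊆ closure C) :
    intrinsicInterior ℝ A = intrinsicInterior ℝ (closure A) := by
  have hclA : closure A = closure C :=
    Set.Subset.antisymm (closure_minimal hAC isClosed_closure) (closure_mono hCA)
  have hspanCA : affineSpan ℝ C = affineSpan ℝ A := by
    refine le_antisymm (affineSpan_mono ℝ hCA) ?_
    calc affineSpan ℝ A ≤ affineSpan ℝ (closure C) := affineSpan_mono ℝ hAC
      _ = affineSpan ℝ C := spanClosure C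
  have h1 : intrinsicInterior ℝ C ⊆ intrinsicInterior ℝ A := iiMono hCA hspanCA
  have h2 : intrinsicInterior ℝ A ⊆ intrinsicInterior ℝ (closure C) := by
    refine iiMono hAC ?_
    rw [spanClosure C, hspanCA]
  have h3 := iiClosure hCconv hCne
  rw [hclA, h3]
  exact Set.Subset.antisymm (h3 ▸ h2) h1

theorem nearlyEqual_cancel (A B E : Set X) (hAne : A.Nonempty) (hBne : B.Nonempty)
    (hA : NearlyConvex A) (hB : NearlyConvex B) (hEne : E.Nonempty) (hE : IsCompact E)
    (h : NearlyEqual (A + E) (B + E)) : NearlyEqual A B := by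
  obtain ⟨C, hCconv, hCA, hAC⟩ := hA
  obtain ⟨D, hDconv, hDB, hBD⟩ := hB
  have hCne : C.Nonempty := by
    rw [← closure_nonempty_iff]; exact hAne.mono hAC
  have hDne : D.Nonempty := by
    rw [← closure_nonempty_iff]; exact hBne.mono hBD
  have hclA : closure A = closure C :=
    Set.Subset.antisymm (closure_minimal hAC isClosed_closure) (closure_mono hCA)
  have hclB : closure B = closure D :=
    Set.Subset.antisymm (closure_minimal hBD isClosed_closure) (closure_mono hDB)
  have hAconv : Convex ℝ (closure A) := hclA ▸ hCconv.closure
  have hBconv : Convex ℝ (closure B) := hclB ▸ hDconv.closure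
  have hEb := hE.isBounded
  -- closure equality
  have step : ∀ {S T : Set X}, Convex ℝ (closure T) →
      closure (S + E) = closure (T + E) → S ⊆ closure T := by
    intro S T hTconv hclST
    have hclosed : IsClosed (closure T + E) := isClosed_closure.add_right_of_isCompact hE
    have h1 : S + E ⊆ closure T + E :=
      calc S + E ⊆ closure (S + E) := subset_closure
        _ = closure (T + E) := hclST
        _ ⊆ closure T + E :=
            closure_minimal (Set.add_subset_add subset_closure Set.Subset.rfl) hclosed
    exact radstrom hTconv isClosed_closure hEb hEne h1
  have hAB : A ⊆ closure B := step hBconv h.1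
  have hBA : B ⊆ closure A := step hAconv h.1.symm
  have hcl : closure A = closure B :=
    Set.Subset.antisymm (closure_minimal hAB isClosed_closure)
      (closure_minimal hBA isClosed_closure)
  refine ⟨hcl, ?_⟩
  rw [iiNearly hCconv hCne hCA hAC, iiNearly hDconv hDne hDB hBD, hcl]
end

section
/- Rådström cancellation: let A be a nonempty subset, E a nonempty bounded subset, and B a nonempty closed convex subset of a Euclidean space such that A + E ⊆ B + E. Then A ⊆ B. -/
open Pointwise

variable {X : Type*} [NormedAddCommGroup X] [InnerProductSpace ℝ X] [FiniteDimensional ℝ X]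

/-! Fix `a ∈ A` and `e₀ ∈ E`. Since `a + eₙ ∈ B + E`, we can write `a + eₙ = bₙ + eₙ₊₁` with
`bₙ ∈ B`, `eₙ₊₁ ∈ E`. Summing telescopes to `n • a + e₀ = b₀ + ⋯ + bₙ₋₁ + eₙ`, so the averages
`(b₀ + ⋯ + bₙ₋₁) / n` lie in the convex set `B` and differ from `a` by `(e₀ - eₙ) / n`, which
tends to `0` because `E` is bounded. As `B` is closed, `a ∈ B`. -/

open Filter Topology Finset

theorem exists_seq_add_eq_add_succ {G : Type*} [Add G] {a : G} {B E : Set G} (hE : E.Nonempty)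
    (h : ∀ e ∈ E, a + e ∈ B + E) :
    ∃ b e : ℕ → G, (∀ n, b n ∈ B) ∧ (∀ n, e n ∈ E) ∧ ∀ n, a + e n = b n + e (n + 1) := by
  choose! next_b hb next_e he heq using h
  obtain ⟨e₀, he₀⟩ := hE
  have hiter : ∀ n, next_e^[n] e₀ ∈ E := fun n => Set.MapsTo.iterate he n he₀
  refine ⟨fun n => next_b (next_e^[n] e₀), fun n => next_e^[n] e₀, fun n => hb _ (hiter n), hiter,
    fun n => ?_⟩
  simp only [Function.iterate_succ_apply', heq _ (hiter n)]

theorem sum_range_eq_nsmul_add_sub_of_add_eq {G : Type*} [AddCommGroup G] {a : G} {b e : ℕ → G}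
    (h : ∀ n, a + e n = b n + e (n + 1)) (n : ℕ) :
    ∑ i ∈ range n, b i = n • a + (e 0 - e n) := by
  have hb : ∀ i, b i = a + (e i - e (i + 1)) := fun i => by rw [← add_sub_assoc, h i]; abel
  simp only [hb, sum_add_distrib, sum_const, card_range, sum_range_sub']

theorem tendsto_inv_smul_sum_range_of_add_eq {V : Type*} [NormedAddCommGroup V] [NormedSpace ℝ V]
    {a : V} {b e : ℕ → V} (he : Bornology.IsBounded (Set.range e))
    (h : ∀ n, a + e n = b n + e (n + 1)) :
    Tendsto (fun n : ℕ => (n : ℝ)⁻¹ • ∑ i ∈ range n, b i) atTop (𝓝 a) := by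
  obtain ⟨C, hC⟩ := Metric.isBounded_range_iff.1 he
  have hdrift : Tendsto (fun n : ℕ => (n : ℝ)⁻¹ • (e 0 - e n)) atTop (𝓝 0) :=
    tendsto_inv_atTop_zero.comp tendsto_natCast_atTop_atTop |>.zero_smul_isBoundedUnder_le
      (isBoundedUnder_of ⟨C, fun n => by simpa [dist_eq_norm] using hC 0 n⟩)
  refine (by simpa using hdrift.const_add a : Tendsto _ _ (𝓝 a)).congr' ?_
  filter_upwards [eventually_ne_atTop 0] with n hn
  rw [sum_range_eq_nsmul_add_sub_of_add_eq h, smul_add, ← Nat.cast_smul_eq_nsmul ℝ,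
    inv_smul_smul₀ (by exact_mod_cast hn)]

theorem Convex.inv_card_smul_sum_mem {V ι : Type*} [AddCommGroup V] [Module ℝ V] {s : Set V}
    (hs : Convex ℝ s) {t : Finset ι} (ht : t.Nonempty) {z : ι → V} (hz : ∀ i ∈ t, z i ∈ s) :
    (#t : ℝ)⁻¹ • ∑ i ∈ t, z i ∈ s := by
  simpa [centerMass, ht.ne_empty] using
    hs.centerMass_mem (w := fun _ => (1 : ℝ)) (fun _ _ => zero_le_one) (by simpa using ht) hz

theorem radstrom_cancellation_general (A B E : Set X)
    (hEne : E.Nonempty) (hE : Bornology.IsBounded E)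
    (hBclosed : IsClosed B) (hBconv : Convex ℝ B)
    (h : A + E ⊆ B + E) : A ⊆ B := by
  intro a ha
  obtain ⟨b, e, hb, he, hbe⟩ :=
    exists_seq_add_eq_add_succ hEne fun x hx => h (Set.add_mem_add ha hx)
  have haverage_mem : ∀ᶠ n : ℕ in atTop, (n : ℝ)⁻¹ • ∑ i ∈ range n, b i ∈ B := by
    filter_upwards [eventually_ne_atTop 0] with n hn
    simpa using hBconv.inv_card_smul_sum_mem (nonempty_range_iff.2 hn) fun i _ => hb i
  exact hBclosed.mem_of_tendsto
    (tendsto_inv_smul_sum_range_of_add_eq (hE.subset (Set.range_subset_iff.2 he)) hbe)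
    haverage_mem

theorem radstrom_cancellation (A B E : Set X) (hAne : A.Nonempty)
    (hEne : E.Nonempty) (hE : Bornology.IsBounded E)
    (hBne : B.Nonempty) (hBclosed : IsClosed B) (hBconv : Convex ℝ B)
    (h : A + E ⊆ B + E) : A ⊆ B :=
  radstrom_cancellation_general A B E hEne hE hBclosed hBconv h
end

section
/- If A is a nearly convex subset of a Euclidean space, then interior A = interior (convex hull of A) = interior (closure of A). -/
variable {X : Type*} [NormedAddCommGroup X] [InnerProductSpace ℝ X] [FiniteDimensional ℝ X]

/-! A convex set `C` has the same interior as its closure: if `interior C` is nonempty this is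
the segment principle, otherwise `C` lies in a proper affine subspace, which is closed and so
contains `closure C` too. Every set squeezed between `C` and `closure C` therefore has the interior
of `C`, and for a nearly convex `A` this applies to `A`, to its convex hull and to its closure. -/

section

variable {E : Type*} [NormedAddCommGroup E] [NormedSpace ℝ E] [FiniteDimensional ℝ E]

theorem Convex.interior_closure_eq_interior {C : Set E} (hC : Convex ℝ C) :
    interior (closure C) = interior C := by
  rcases (interior C).eq_empty_or_nonempty with hempty | hne
  · have hspan : affineSpan ℝ (closure C) = affineSpan ℝ C :=
      le_antisymm
        (affineSpan_le.2 <| closure_minimal (subset_affineSpan ℝ C)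
          (affineSpan ℝ C).closed_of_finiteDimensional)
        (affineSpan_mono ℝ subset_closure)
    rw [hempty, ← Set.not_nonempty_iff_eq_empty, hC.closure.interior_nonempty_iff_affineSpan_eq_top,
      hspan, ← hC.interior_nonempty_iff_affineSpan_eq_top, Set.not_nonempty_iff_eq_empty]
    exact hempty
  · exact hC.interior_closure_eq_interior_of_nonempty_interior hne

theorem Convex.interior_eq_of_subset_of_subset_closure {B C : Set E} (hC : Convex ℝ C)
    (hCB : C ⊆ B) (hBC : B ⊆ closure C) : interior B = interior C :=
  le_antisymm (hC.interior_closure_eq_interior ▸ interior_mono hBC) (interior_mono hCB)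

end

theorem interior_eq_of_nearlyConvex (A : Set X) (h : NearlyConvex A) :
    interior A = interior (convexHull ℝ A) ∧
    interior A = interior (closure A) := by
  obtain ⟨C, hC, hCA, hAC⟩ := h
  rw [hC.interior_eq_of_subset_of_subset_closure hCA hAC,
    hC.interior_eq_of_subset_of_subset_closure (hCA.trans (subset_convexHull ℝ A))
      (convexHull_min hAC hC.closure),
    hC.interior_eq_of_subset_of_subset_closure (hCA.trans subset_closure)
      (closure_minimal hAC isClosed_closure)]
  exact ⟨rfl, rfl⟩
end
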